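/- Let μ be a finite Borel measure on ℝ^d. Then μ has no atoms if and only if for almost every θ ∈ S^{d−1} (with respect to the uniform measure on the sphere), the pushforward measure (P_θ)_#μ on ℝ has no atoms, where P_θ(x) = ⟨θ,x⟩. -/

import Mathlib

open MeasureTheory Metric Set Real
open scoped InnerProductSpace ENNReal NNReal

noncomputable section

/-- Points of `ℝ^d` with the Euclidean structure. -/
abbrev Pt (d : ℕ) := EuclideanSpace ℝ (Fin d)

/-- Quantile function `F_ν⁻¹(t) = inf {s | F_ν(s) ≥ t}` of a measure on `ℝ`. -/
def quantile (ν : Measure ℝ) (t : ℝ) : ℝ :=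
  sInf {s : ℝ | t ≤ (ν (Iic s)).toReal}

/-- `p`-th power of the 1D `p`-Wasserstein distance, defined via quantile functions:
`W_p^p(ν₁,ν₂) = ∫₀¹ |F_{ν₁}⁻¹(t) − F_{ν₂}⁻¹(t)|^p dt`. -/
def Wpp (p : ℝ) (ν₁ ν₂ : Measure ℝ) : ℝ :=
  ∫ t in Ioo (0:ℝ) 1, |quantile ν₁ t - quantile ν₂ t| ^ p

/-- Projection `(P_θ)_# μ` of a measure on `ℝ^d` in direction `θ`, `P_θ(x) = ⟨θ,x⟩`. -/
def proj {d : ℕ} (θ : Pt d) (μ : Measure (Pt d)) : Measure ℝ :=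
  Measure.map (fun x => ⟪θ, x⟫_ℝ) μ

/-- Uniform probability measure on the unit sphere of `ℝ^d`
(normalized `(d-1)`-dimensional Hausdorff measure on the sphere). -/
def sphereUniform (d : ℕ) : Measure (Pt d) :=
  (μH[(d:ℝ) - 1] (sphere (0 : Pt d) 1))⁻¹ • (μH[(d:ℝ) - 1]).restrict (sphere (0 : Pt d) 1)

/-- `p`-th power of the sliced Wasserstein distance
`SW_p^p(μ,ρ) = ∫_{S^{d-1}} W_p^p(μ_θ, ρ_θ) dθ`. -/
def SWpp (d : ℕ) (p : ℝ) (μ ρ : Measure (Pt d)) : ℝ :=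
  ∫ θ, Wpp p (proj θ μ) (proj θ ρ) ∂(sphereUniform d)

end

/-!
If `μ` has no atoms, then for distinct `x, y` the directions `θ` with `⟪θ, x - y⟫ = 0` form a
great subsphere, which is null for the uniform measure `σ`. By Fubini on `σ ⊗ μ ⊗ μ`, for
`σ`-a.e. `θ` the pairs lying on a common level set of `⟪θ, ·⟫` are `μ ⊗ μ`-null, and a level set
`L` has `μ L ^ 2 = (μ ⊗ μ) (L ×ˢ L)`. Conversely `μ {x} ≤ (P_θ)_# μ {⟪θ, x⟫}` for every `θ`, and an
a.e. statement has a witness because `σ` is a probability measure: the unit sphere has positive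
finite `(d-1)`-dimensional Hausdorff measure. It is positive because the orthogonal projection onto
a hyperplane is `1`-Lipschitz and maps the sphere onto a unit ball; it is finite because each of two
opposite closed hemispheres is the image of a compact set under the smooth inverse stereographic
projection.
-/

open Module

theorem LocallyLipschitz.hausdorffMeasure_image_lt_top {X Y : Type*} [MetricSpace X]
    [MetricSpace Y] [MeasurableSpace X] [BorelSpace X] [MeasurableSpace Y] [BorelSpace Y]
    {f : X → Y} (hf : LocallyLipschitz f) {s : Set X} (hs : IsCompact s) {d : ℝ} (hd : 0 ≤ d)
    (hs_fin : μH[d] s < ⊤) : μH[d] (f '' s) < ⊤ := by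
  obtain ⟨K, hK⟩ := hf.locallyLipschitzOn.exists_lipschitzOnWith_of_compact hs
  exact (hK.hausdorffMeasure_image_le hd).trans_lt (ENNReal.mul_lt_top (by finiteness) hs_fin)

theorem ball_subset_orthogonalProjectionOnto_image_sphere {E : Type*} [NormedAddCommGroup E]
    [InnerProductSpace ℝ E] {v : E} (hv : ‖v‖ = 1) :
    ball (0 : (ℝ ∙ v)ᗮ) 1 ⊆ (ℝ ∙ v)ᗮ.orthogonalProjectionOnto '' sphere (0 : E) 1 := by
  intro y hy
  rw [mem_ball_zero_iff] at hy
  set a := √(1 - ‖y‖ ^ 2)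
  have ha : a * a = 1 - ‖y‖ ^ 2 := Real.mul_self_sqrt (by nlinarith [norm_nonneg y])
  have hyv : ⟪(y : E), a • v⟫_ℝ = 0 := by
    rw [real_inner_smul_right, Submodule.mem_orthogonal_singleton_iff_inner_left.1 y.2, mul_zero]
  refine ⟨y + a • v, ?_, ?_⟩
  · have hsq := norm_add_sq_eq_norm_sq_add_norm_sq_of_inner_eq_zero _ _ hyv
    rw [norm_smul, hv, mul_one, Real.norm_of_nonneg (Real.sqrt_nonneg _), ha,
      Submodule.coe_norm] at hsq
    rw [mem_sphere_zero_iff_norm]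
    nlinarith [norm_nonneg ((y : E) + a • v)]
  · simp [Submodule.orthogonalProjectionOnto_orthogonalComplement_singleton_eq_zero]

section Sphere

variable {E : Type*} [NormedAddCommGroup E] [InnerProductSpace ℝ E] [MeasurableSpace E]
  [BorelSpace E] {n : ℕ} [Fact (finrank ℝ E = n + 1)]

theorem isAddHaarMeasure_hausdorffMeasure_orthogonal {v : E} (hv : v ≠ 0) :
    (μH[(n : ℝ)] : Measure (ℝ ∙ v)ᗮ).IsAddHaarMeasure := by
  have : FiniteDimensional ℝ E := .of_fact_finrank_eq_succ n
  have h := isAddHaarMeasure_hausdorffMeasure (E := (ℝ ∙ v)ᗮ)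
  rwa [Submodule.finrank_orthogonal_span_singleton (n := n) hv] at h

theorem hausdorffMeasure_sphere_pos : 0 < μH[(n : ℝ)] (sphere (0 : E) 1) := by
  have : Nontrivial E := nontrivial_of_finrank_eq_succ (R := ℝ) (n := n) Fact.out
  obtain ⟨v, hv⟩ := exists_norm_eq E zero_le_one
  have := isAddHaarMeasure_hausdorffMeasure_orthogonal (n := n) (v := v) (by rintro rfl; simp at hv)
  calc 0 < μH[(n : ℝ)] (ball (0 : (ℝ ∙ v)ᗮ) 1) := measure_ball_pos _ _ one_pos
    _ ≤ μH[(n : ℝ)] ((ℝ ∙ v)ᗮ.orthogonalProjectionOnto '' sphere (0 : E) 1) :=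
      measure_mono (ball_subset_orthogonalProjectionOnto_image_sphere hv)
    _ ≤ μH[(n : ℝ)] (sphere (0 : E) 1) :=
      hausdorffMeasure_orthogonalProjectionOnto_le _ _ _ n.cast_nonneg

theorem hausdorffMeasure_sphere_inter_orthogonal {v : E} (hv : v ≠ 0) :
    μH[(n : ℝ)] (sphere (0 : E) 1 ∩ (ℝ ∙ v)ᗮ) = 0 := by
  have : FiniteDimensional ℝ E := .of_fact_finrank_eq_succ n
  have := isAddHaarMeasure_hausdorffMeasure_orthogonal (n := n) hv
  have himage : sphere (0 : E) 1 ∩ (ℝ ∙ v)ᗮ = ((↑) : (ℝ ∙ v)ᗮ → E) '' sphere 0 1 := by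
    ext x
    constructor
    · rintro ⟨hx, hxv⟩
      exact ⟨⟨x, hxv⟩, by simpa using hx, rfl⟩
    · rintro ⟨y, hy, rfl⟩
      exact ⟨by simpa using hy, y.2⟩
  rw [himage, isometry_subtype_coe.hausdorffMeasure_image (.inl n.cast_nonneg)]
  exact Measure.addHaar_sphere_of_ne_zero _ _ one_ne_zero

theorem hausdorffMeasure_sphere_inter_inner_nonpos_lt_top {v : E} (hv : ‖v‖ = 1) :
    μH[(n : ℝ)] (sphere (0 : E) 1 ∩ {x | ⟪v, x⟫_ℝ ≤ 0}) < ⊤ := by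
  have : FiniteDimensional ℝ E := .of_fact_finrank_eq_succ n
  set H := sphere (0 : E) 1 ∩ {x | ⟪v, x⟫_ℝ ≤ 0}
  have hH : IsCompact H :=
    (isCompact_sphere 0 1).inter_right (isClosed_le (by fun_prop) continuous_const)
  have hT : IsCompact (stereoToFun v '' H) :=
    hH.image_of_continuousOn <| continuousOn_stereoToFun.mono fun x hx h1 => by
      have : ⟪v, x⟫_ℝ ≤ 0 := hx.2
      simp only [innerSL_apply_apply] at h1
      linarith
  have hH_sub : H ⊆ (stereoInvFunAux v ∘ (↑)) '' (stereoToFun v '' H) := by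
    rintro x ⟨hx, hxv⟩
    have hne : x ≠ v := by
      rintro rfl
      norm_num [hv] at hxv
    exact ⟨_, mem_image_of_mem _ ⟨hx, hxv⟩,
      congrArg Subtype.val (stereo_left_inv hv (x := ⟨x, hx⟩) hne)⟩
  have := isAddHaarMeasure_hausdorffMeasure_orthogonal (n := n) (v := v) (by rintro rfl; simp at hv)
  have hlip : LocallyLipschitz (stereoInvFunAux v ∘ ((↑) : (ℝ ∙ v)ᗮ → E)) :=
    (contDiff_stereoInvFunAux.comp (ℝ ∙ v)ᗮ.subtypeL.contDiff).locallyLipschitz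
  exact (measure_mono hH_sub).trans_lt
    (hlip.hausdorffMeasure_image_lt_top hT n.cast_nonneg hT.measure_lt_top)

theorem hausdorffMeasure_sphere_lt_top : μH[(n : ℝ)] (sphere (0 : E) 1) < ⊤ := by
  have : Nontrivial E := nontrivial_of_finrank_eq_succ (R := ℝ) (n := n) Fact.out
  obtain ⟨v, hv⟩ := exists_norm_eq E zero_le_one
  have hcover : sphere (0 : E) 1 ⊆
      (sphere 0 1 ∩ {x | ⟪v, x⟫_ℝ ≤ 0}) ∪ (sphere 0 1 ∩ {x | ⟪-v, x⟫_ℝ ≤ 0}) := by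
    intro x hx
    rcases le_total ⟪v, x⟫_ℝ 0 with h | h
    · exact .inl ⟨hx, h⟩
    · exact .inr ⟨hx, by simpa [inner_neg_left] using h⟩
  refine (measure_mono hcover).trans_lt ((measure_union_le _ _).trans_lt ?_)
  exact ENNReal.add_lt_top.2 ⟨hausdorffMeasure_sphere_inter_inner_nonpos_lt_top hv,
    hausdorffMeasure_sphere_inter_inner_nonpos_lt_top (by rwa [norm_neg])⟩

end Sphere

theorem ae_fst_ne_snd {X : Type*} [MeasurableSpace X] [MeasurableEq X] (μ ν : Measure X)
    [SFinite ν] [NullSingletonClass ν] : ∀ᵐ p ∂μ.prod ν, p.1 ≠ p.2 := by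
  simp only [ae_iff, not_not]
  refine (Measure.measure_prod_null measurableSet_diagonal).2 (ae_of_all _ fun x => ?_)
  have : Prod.mk x ⁻¹' diagonal X = {x} := by ext; simp [eq_comm]
  simp [this]

section Projections

variable {E : Type*} [NormedAddCommGroup E] [InnerProductSpace ℝ E] [MeasurableSpace E]
  [BorelSpace E] [SecondCountableTopology E]

theorem ae_prod_inner_sub_eq_zero (σ μ : Measure E) [SFinite σ] [SFinite μ] [NullSingletonClass μ]
    (hσ : ∀ v ≠ 0, σ {θ | ⟪θ, v⟫_ℝ = 0} = 0) :
    ∀ᵐ θ ∂σ, μ.prod μ {p | ⟪θ, p.1 - p.2⟫_ℝ = 0} = 0 := by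
  set A : Set (E × E × E) := {q | ⟪q.1, q.2.1 - q.2.2⟫_ℝ = 0}
  have hA : MeasurableSet A := measurableSet_eq_fun (by fun_prop) measurable_const
  have hA_null : σ.prod (μ.prod μ) A = 0 := by
    rw [Measure.prod_apply_symm hA]
    refine lintegral_eq_zero_of_ae_eq_zero ?_
    filter_upwards [ae_fst_ne_snd μ μ] with p hp
    exact hσ _ (sub_ne_zero.2 hp)
  exact (Measure.measure_prod_null hA).1 hA_null

theorem ae_forall_measure_inner_eq_eq_zero (σ μ : Measure E) [SFinite σ] [SFinite μ]
    [NullSingletonClass μ] (hσ : ∀ v ≠ 0, σ {θ | ⟪θ, v⟫_ℝ = 0} = 0) :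
    ∀ᵐ θ ∂σ, ∀ u : ℝ, μ {x | ⟪θ, x⟫_ℝ = u} = 0 := by
  filter_upwards [ae_prod_inner_sub_eq_zero σ μ hσ] with θ hθ u
  have hsub : {x | ⟪θ, x⟫_ℝ = u} ×ˢ {x | ⟪θ, x⟫_ℝ = u} ⊆
      {p : E × E | ⟪θ, p.1 - p.2⟫_ℝ = 0} := by
    rintro ⟨x, y⟩ ⟨hx, hy⟩
    simp_all [inner_sub_right]
  have := measure_mono_null hsub hθ
  rwa [Measure.prod_prod, mul_self_eq_zero] at this

end Projections

theorem proj_apply_singleton {d : ℕ} (θ : Pt d) (μ : Measure (Pt d)) (u : ℝ) :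
    proj θ μ {u} = μ {x | ⟪θ, x⟫_ℝ = u} :=
  Measure.map_apply (by fun_prop) (measurableSet_singleton u)

open scoped EuclideanSpace

theorem sphereUniform_succ (n : ℕ) :
    sphereUniform (n + 1) = (μH[(n : ℝ)] (sphere (0 : Pt (n + 1)) 1))⁻¹ •
      (μH[(n : ℝ)]).restrict (sphere (0 : Pt (n + 1)) 1) := by
  simp [sphereUniform]

instance isProbabilityMeasure_sphereUniform (n : ℕ) :
    IsProbabilityMeasure (sphereUniform (n + 1)) := by
  constructor
  rw [sphereUniform_succ, Measure.smul_apply, Measure.restrict_apply_univ, smul_eq_mul]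
  exact ENNReal.inv_mul_cancel hausdorffMeasure_sphere_pos.ne' hausdorffMeasure_sphere_lt_top.ne

theorem sphereUniform_inner_eq_zero (n : ℕ) {v : Pt (n + 1)} (hv : v ≠ 0) :
    sphereUniform (n + 1) {θ | ⟪θ, v⟫_ℝ = 0} = 0 := by
  have hmeas : MeasurableSet {θ : Pt (n + 1) | ⟪θ, v⟫_ℝ = 0} :=
    measurableSet_eq_fun (by fun_prop) measurable_const
  rw [sphereUniform_succ, Measure.smul_apply, Measure.restrict_apply hmeas, smul_eq_mul, inter_comm]
  have : {θ : Pt (n + 1) | ⟪θ, v⟫_ℝ = 0} = (ℝ ∙ v)ᗮ := by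
    ext; exact Submodule.mem_orthogonal_singleton_iff_inner_left.symm
  rw [this, hausdorffMeasure_sphere_inter_orthogonal hv, mul_zero]

/-- A finite measure on `ℝ^d` is atomless iff almost every projection is atomless. -/
theorem statement9 (d : ℕ) (hd : 1 ≤ d) (μ : Measure (Pt d)) [IsFiniteMeasure μ] :
    (∀ x : Pt d, μ {x} = 0) ↔
      (∀ᵐ θ ∂(sphereUniform d), ∀ u : ℝ, proj θ μ {u} = 0) := by
  obtain ⟨n, rfl⟩ := Nat.exists_eq_add_of_le' hd
  simp only [proj_apply_singleton]
  refine ⟨fun hμ => ?_, fun h x => ?_⟩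
  · have : NullSingletonClass μ := ⟨hμ⟩
    exact ae_forall_measure_inner_eq_eq_zero _ μ fun v hv => sphereUniform_inner_eq_zero n hv
  · obtain ⟨θ, hθ⟩ := h.exists
    exact measure_mono_null (fun y hy => by rw [mem_singleton_iff.1 hy]; rfl) (hθ ⟪θ, x⟫_ℝ)
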